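/- Suppose u, v, z solve the N = 3 Riemann type system and set r := (v_x v³ - 3 u_x v² z + u z_x (u z - v²) + 6 v z²) z^{-3}, assuming z nowhere zero. Then D_t r + u_x r = 6. -/

import Mathlib

open Real

noncomputable def pdx (f : ℝ → ℝ → ℝ) (x t : ℝ) : ℝ := deriv (fun y => f y t) x

noncomputable def pdt (f : ℝ → ℝ → ℝ) (x t : ℝ) : ℝ := deriv (fun s => f x s) t


section helpers
variable {f : ℝ → ℝ → ℝ}

lemma hasDerivAt_x' (hf : ContDiff ℝ (⊤ : ℕ∞) (Function.uncurry f)) (x t : ℝ) :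
    HasDerivAt (fun y => f y t) (fderiv ℝ (Function.uncurry f) (x, t) (1, 0)) x := by
  have h1 : HasFDerivAt (Function.uncurry f) (fderiv ℝ (Function.uncurry f) (x, t)) (x, t) :=
    (hf.differentiable (by simp) (x, t)).hasFDerivAt
  have h2 : HasDerivAt (fun y : ℝ => (y, t)) ((1 : ℝ), (0 : ℝ)) x :=
    (hasDerivAt_id x).prodMk (hasDerivAt_const x t)
  exact h1.comp_hasDerivAt x h2

lemma hasDerivAt_t' (hf : ContDiff ℝ (⊤ : ℕ∞) (Function.uncurry f)) (x t : ℝ) :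
    HasDerivAt (fun s => f x s) (fderiv ℝ (Function.uncurry f) (x, t) (0, 1)) t := by
  have h1 : HasFDerivAt (Function.uncurry f) (fderiv ℝ (Function.uncurry f) (x, t)) (x, t) :=
    (hf.differentiable (by simp) (x, t)).hasFDerivAt
  have h2 : HasDerivAt (fun s : ℝ => (x, s)) ((0 : ℝ), (1 : ℝ)) t :=
    (hasDerivAt_const t x).prodMk (hasDerivAt_id t)
  exact h1.comp_hasDerivAt t h2

lemma pdx_eq (hf : ContDiff ℝ (⊤ : ℕ∞) (Function.uncurry f)) (x t : ℝ) :
    pdx f x t = fderiv ℝ (Function.uncurry f) (x, t) (1, 0) := (hasDerivAt_x' hf x t).deriv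

lemma pdt_eq (hf : ContDiff ℝ (⊤ : ℕ∞) (Function.uncurry f)) (x t : ℝ) :
    pdt f x t = fderiv ℝ (Function.uncurry f) (x, t) (0, 1) := (hasDerivAt_t' hf x t).deriv

lemma hasDerivAt_pdx (hf : ContDiff ℝ (⊤ : ℕ∞) (Function.uncurry f)) (x t : ℝ) :
    HasDerivAt (fun y => f y t) (pdx f x t) x := by
  rw [pdx_eq hf]; exact hasDerivAt_x' hf x t

lemma hasDerivAt_pdt (hf : ContDiff ℝ (⊤ : ℕ∞) (Function.uncurry f)) (x t : ℝ) :
    HasDerivAt (fun s => f x s) (pdt f x t) t := by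
  rw [pdt_eq hf]; exact hasDerivAt_t' hf x t

lemma contDiff_pdx (hf : ContDiff ℝ (⊤ : ℕ∞) (Function.uncurry f)) :
    ContDiff ℝ (⊤ : ℕ∞) (Function.uncurry (pdx f)) := by
  have h : Function.uncurry (pdx f) = fun p : ℝ × ℝ => fderiv ℝ (Function.uncurry f) p (1, 0) :=
    funext fun p => pdx_eq hf p.1 p.2
  rw [h]
  exact (hf.fderiv_right (by simp)).clm_apply contDiff_const

lemma contDiff_pdt (hf : ContDiff ℝ (⊤ : ℕ∞) (Function.uncurry f)) :
    ContDiff ℝ (⊤ : ℕ∞) (Function.uncurry (pdt f)) := by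
  have h : Function.uncurry (pdt f) = fun p : ℝ × ℝ => fderiv ℝ (Function.uncurry f) p (0, 1) :=
    funext fun p => pdt_eq hf p.1 p.2
  rw [h]
  exact (hf.fderiv_right (by simp)).clm_apply contDiff_const

lemma fderiv_eval (hf : ContDiff ℝ (⊤ : ℕ∞) (Function.uncurry f)) (p : ℝ × ℝ) (v w : ℝ × ℝ) :
    fderiv ℝ (fun q : ℝ × ℝ => fderiv ℝ (Function.uncurry f) q v) p w
      = fderiv ℝ (fderiv ℝ (Function.uncurry f)) p w v := by
  have hD : DifferentiableAt ℝ (fderiv ℝ (Function.uncurry f)) p :=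
    ((hf.fderiv_right (m := (⊤ : ℕ∞)) (by simp)).differentiable (by simp)) p
  have h := ((ContinuousLinearMap.apply ℝ ℝ v).hasFDerivAt.comp p hD.hasFDerivAt).fderiv
  have h2 : fderiv ℝ (fun q : ℝ × ℝ => fderiv ℝ (Function.uncurry f) q v) p
      = (ContinuousLinearMap.apply ℝ ℝ v).comp (fderiv ℝ (fderiv ℝ (Function.uncurry f)) p) := h
  rw [h2]; rfl

lemma pd_comm (hf : ContDiff ℝ (⊤ : ℕ∞) (Function.uncurry f)) (x t : ℝ) :
    pdt (pdx f) x t = pdx (pdt f) x t := by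
  have e1 : Function.uncurry (pdx f) = fun p : ℝ × ℝ => fderiv ℝ (Function.uncurry f) p (1, 0) :=
    funext fun p => pdx_eq hf p.1 p.2
  have e2 : Function.uncurry (pdt f) = fun p : ℝ × ℝ => fderiv ℝ (Function.uncurry f) p (0, 1) :=
    funext fun p => pdt_eq hf p.1 p.2
  rw [pdt_eq (contDiff_pdx hf) x t, pdx_eq (contDiff_pdt hf) x t, e1, e2,
    fderiv_eval hf _ _ _, fderiv_eval hf _ _ _]
  exact (hf.contDiffAt.isSymmSndFDerivAt (by rw [minSmoothness_of_isRCLikeNormedField]; exact WithTop.coe_le_coe.mpr le_top)) _ _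

end helpers

/-- The material derivative `D_t = ∂/∂t + u ∂/∂x` associated to the velocity `u`. -/
noncomputable def matDt (u f : ℝ → ℝ → ℝ) : ℝ → ℝ → ℝ :=
  fun x t => pdt f x t + u x t * pdx f x t

theorem statement15
    (u v z : ℝ → ℝ → ℝ)
    (hu : ContDiff ℝ (⊤ : ℕ∞) (Function.uncurry u))
    (hv : ContDiff ℝ (⊤ : ℕ∞) (Function.uncurry v))
    (hz : ContDiff ℝ (⊤ : ℕ∞) (Function.uncurry z))
    (heq1 : ∀ x t, pdt u x t = v x t - u x t * pdx u x t)
    (heq2 : ∀ x t, pdt v x t = z x t - u x t * pdx v x t)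
    (heq3 : ∀ x t, pdt z x t = - u x t * pdx z x t)
    (hzne : ∀ x t, z x t ≠ 0)
    (r : ℝ → ℝ → ℝ)
    (hr : ∀ x t, r x t =
      (pdx v x t * (v x t) ^ 3 - 3 * pdx u x t * (v x t) ^ 2 * z x t
        + u x t * pdx z x t * (u x t * z x t - (v x t) ^ 2)
        + 6 * v x t * (z x t) ^ 2) / (z x t) ^ 3) :
    ∀ x t, matDt u r x t + pdx u x t * r x t = 6 := by
  intro x t
  have hux := contDiff_pdx hu
  have hvx := contDiff_pdx hv
  have hzx := contDiff_pdx hz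
  -- HasDerivAt facts in the t-direction
  have Ha : HasDerivAt (fun s => u x s) (pdt u x t) t := hasDerivAt_pdt hu x t
  have Hb : HasDerivAt (fun s => v x s) (pdt v x t) t := hasDerivAt_pdt hv x t
  have Hc : HasDerivAt (fun s => z x s) (pdt z x t) t := hasDerivAt_pdt hz x t
  have Hax : HasDerivAt (fun s => pdx u x s) (pdt (pdx u) x t) t := hasDerivAt_pdt hux x t
  have Hbx : HasDerivAt (fun s => pdx v x s) (pdt (pdx v) x t) t := hasDerivAt_pdt hvx x t
  have Hcx : HasDerivAt (fun s => pdx z x s) (pdt (pdx z) x t) t := hasDerivAt_pdt hzx x t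
  -- HasDerivAt facts in the x-direction
  have Ga : HasDerivAt (fun y => u y t) (pdx u x t) x := hasDerivAt_pdx hu x t
  have Gb : HasDerivAt (fun y => v y t) (pdx v x t) x := hasDerivAt_pdx hv x t
  have Gc : HasDerivAt (fun y => z y t) (pdx z x t) x := hasDerivAt_pdx hz x t
  have Gax : HasDerivAt (fun y => pdx u y t) (pdx (pdx u) x t) x := hasDerivAt_pdx hux x t
  have Gbx : HasDerivAt (fun y => pdx v y t) (pdx (pdx v) x t) x := hasDerivAt_pdx hvx x t
  have Gcx : HasDerivAt (fun y => pdx z y t) (pdx (pdx z) x t) x := hasDerivAt_pdx hzx x t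
  -- mixed partials
  have e1 : pdt (pdx u) x t
      = pdx v x t - (pdx u x t * pdx u x t + u x t * pdx (pdx u) x t) := by
    rw [pd_comm hu x t]
    have hfun : pdt u = fun X T => v X T - u X T * pdx u X T :=
      funext fun X => funext fun T => heq1 X T
    rw [hfun]
    exact (Gb.sub (Ga.mul Gax)).deriv
  have e2 : pdt (pdx v) x t
      = pdx z x t - (pdx u x t * pdx v x t + u x t * pdx (pdx v) x t) := by
    rw [pd_comm hv x t]
    have hfun : pdt v = fun X T => z X T - u X T * pdx v X T :=
      funext fun X => funext fun T => heq2 X T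
    rw [hfun]
    exact (Gc.sub (Ga.mul Gbx)).deriv
  have e3 : pdt (pdx z) x t
      = -pdx u x t * pdx z x t + -u x t * pdx (pdx z) x t := by
    rw [pd_comm hz x t]
    have hfun : pdt z = fun X T => -u X T * pdx z X T :=
      funext fun X => funext fun T => heq3 X T
    rw [hfun]
    exact ((Ga.neg).mul Gcx).deriv
  -- derivative of r in the t-direction
  have HT : HasDerivAt (fun s => (pdx v x s * (v x s) ^ 3 - 3 * pdx u x s * (v x s) ^ 2 * z x s
        + u x s * pdx z x s * (u x s * z x s - (v x s) ^ 2)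
        + 6 * v x s * (z x s) ^ 2) / (z x s) ^ 3)
      ((((pdt (pdx v) x t)*(v x t)^3 + 3*(pdx v x t)*(v x t)^2*(pdt v x t) - (3*(pdt (pdx u) x t)*(v x t)^2*(z x t) + 6*(pdx u x t)*(v x t)*(pdt v x t)*(z x t) + 3*(pdx u x t)*(v x t)^2*(pdt z x t)) + (((pdt u x t)*(pdx z x t) + (u x t)*(pdt (pdx z) x t))*((u x t)*(z x t) - (v x t)^2) + (u x t)*(pdx z x t)*((pdt u x t)*(z x t) + (u x t)*(pdt z x t) - 2*(v x t)*(pdt v x t))) + (6*(pdt v x t)*(z x t)^2 + 12*(v x t)*(z x t)*(pdt z x t))) * (z x t)^3 - ((pdx v x t)*(v x t)^3 - 3*(pdx u x t)*(v x t)^2*(z x t) + (u x t)*(pdx z x t)*((u x t)*(z x t) - (v x t)^2) + 6*(v x t)*(z x t)^2) * (3*(z x t)^2*(pdt z x t))) / ((z x t)^3)^2) t := by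
    have H := ((((Hbx.mul (Hb.pow 3)).sub (((Hax.const_mul (3:ℝ)).mul (Hb.pow 2)).mul Hc)).add
        ((Ha.mul Hcx).mul ((Ha.mul Hc).sub (Hb.pow 2)))).add
        ((Hb.const_mul (6:ℝ)).mul (Hc.pow 2))).div (Hc.pow 3) (pow_ne_zero 3 (hzne x t))
    refine H.congr_deriv ?_
    simp only [Pi.pow_apply, Pi.mul_apply, Pi.add_apply, Pi.sub_apply, Pi.neg_apply, Pi.div_apply]
    push_cast
    ring
  have HX : HasDerivAt (fun y => (pdx v y t * (v y t) ^ 3 - 3 * pdx u y t * (v y t) ^ 2 * z y t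
        + u y t * pdx z y t * (u y t * z y t - (v y t) ^ 2)
        + 6 * v y t * (z y t) ^ 2) / (z y t) ^ 3)
      ((((pdx (pdx v) x t)*(v x t)^3 + 3*(pdx v x t)*(v x t)^2*(pdx v x t) - (3*(pdx (pdx u) x t)*(v x t)^2*(z x t) + 6*(pdx u x t)*(v x t)*(pdx v x t)*(z x t) + 3*(pdx u x t)*(v x t)^2*(pdx z x t)) + (((pdx u x t)*(pdx z x t) + (u x t)*(pdx (pdx z) x t))*((u x t)*(z x t) - (v x t)^2) + (u x t)*(pdx z x t)*((pdx u x t)*(z x t) + (u x t)*(pdx z x t) - 2*(v x t)*(pdx v x t))) + (6*(pdx v x t)*(z x t)^2 + 12*(v x t)*(z x t)*(pdx z x t))) * (z x t)^3 - ((pdx v x t)*(v x t)^3 - 3*(pdx u x t)*(v x t)^2*(z x t) + (u x t)*(pdx z x t)*((u x t)*(z x t) - (v x t)^2) + 6*(v x t)*(z x t)^2) * (3*(z x t)^2*(pdx z x t))) / ((z x t)^3)^2) x := by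
    have H := ((((Gbx.mul (Gb.pow 3)).sub (((Gax.const_mul (3:ℝ)).mul (Gb.pow 2)).mul Gc)).add
        ((Ga.mul Gcx).mul ((Ga.mul Gc).sub (Gb.pow 2)))).add
        ((Gb.const_mul (6:ℝ)).mul (Gc.pow 2))).div (Gc.pow 3) (pow_ne_zero 3 (hzne x t))
    refine H.congr_deriv ?_
    simp only [Pi.pow_apply, Pi.mul_apply, Pi.add_apply, Pi.sub_apply, Pi.neg_apply, Pi.div_apply]
    push_cast
    ring
  have hpt : pdt r x t = (((pdt (pdx v) x t)*(v x t)^3 + 3*(pdx v x t)*(v x t)^2*(pdt v x t) - (3*(pdt (pdx u) x t)*(v x t)^2*(z x t) + 6*(pdx u x t)*(v x t)*(pdt v x t)*(z x t) + 3*(pdx u x t)*(v x t)^2*(pdt z x t)) + (((pdt u x t)*(pdx z x t) + (u x t)*(pdt (pdx z) x t))*((u x t)*(z x t) - (v x t)^2) + (u x t)*(pdx z x t)*((pdt u x t)*(z x t) + (u x t)*(pdt z x t) - 2*(v x t)*(pdt v x t))) + (6*(pdt v x t)*(z x t)^2 + 12*(v x t)*(z x t)*(pdt z x t))) * (z x t)^3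 - ((pdx v x t)*(v x t)^3 - 3*(pdx u x t)*(v x t)^2*(z x t) + (u x t)*(pdx z x t)*((u x t)*(z x t) - (v x t)^2) + 6*(v x t)*(z x t)^2) * (3*(z x t)^2*(pdt z x t))) / ((z x t)^3)^2 := by
    have hfunT : (fun s => r x s) = (fun s => (pdx v x s * (v x s) ^ 3
        - 3 * pdx u x s * (v x s) ^ 2 * z x s
        + u x s * pdx z x s * (u x s * z x s - (v x s) ^ 2)
        + 6 * v x s * (z x s) ^ 2) / (z x s) ^ 3) := funext fun s => hr x s
    unfold pdt
    rw [hfunT]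
    exact HT.deriv
  have hpx : pdx r x t = (((pdx (pdx v) x t)*(v x t)^3 + 3*(pdx v x t)*(v x t)^2*(pdx v x t) - (3*(pdx (pdx u) x t)*(v x t)^2*(z x t) + 6*(pdx u x t)*(v x t)*(pdx v x t)*(z x t) + 3*(pdx u x t)*(v x t)^2*(pdx z x t)) + (((pdx u x t)*(pdx z x t) + (u x t)*(pdx (pdx z) x t))*((u x t)*(z x t) - (v x t)^2) + (u x t)*(pdx z x t)*((pdx u x t)*(z x t) + (u x t)*(pdx z x t) - 2*(v x t)*(pdx v x t))) + (6*(pdx v x t)*(z x t)^2 + 12*(v x t)*(z x t)*(pdx z x t))) * (z x t)^3 - ((pdx v x t)*(v x t)^3 - 3*(pdx u x t)*(v x t)^2*(z x t) + (u x t)*(pdx z x t)*((u x t)*(z x t) - (v x t)^2) + 6*(v x t)*(z x t)^2) * (3*(z x t)^2*(pdx z x t))) / ((z x t)^3)^2 := by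
    have hfunX : (fun y => r y t) = (fun y => (pdx v y t * (v y t) ^ 3
        - 3 * pdx u y t * (v y t) ^ 2 * z y t
        + u y t * pdx z y t * (u y t * z y t - (v y t) ^ 2)
        + 6 * v y t * (z y t) ^ 2) / (z y t) ^ 3) := funext fun y => hr y t
    unfold pdx
    rw [hfunX]
    exact HX.deriv
  show pdt r x t + u x t * pdx r x t + pdx u x t * r x t = 6
  rw [hpt, hpx, hr x t, e1, e2, e3, heq1 x t, heq2 x t, heq3 x t]
  have hc := hzne x t
  field_simp
  ring
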